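/- Let V be a finite type, c : V → V → ℝ≥0 a capacity function, S ⊆ V a subset, and P ≥ 1 an integer. Consider the digraphs whose edge relations are 'capacity positive': u → v iff c u v > 0 on V, and x → y iff c_P x y > 0 on the P-fold replication of S. Then the P-fold replication of S contains a directed cycle if and only if c contains a directed cycle. -/
import Mathlib


/-!
STATEMENT 14: The digraph of positive-capacity edges of the P-fold replication of `S`
contains a directed cycle if and only if the digraph of positive-capacity edges of `c`
contains a directed cycle.
-/

open Finset

attribute [local instance] Classical.propDecidable

noncomputable section

/-- A digraph with edge relation `r` contains a directed cycle: a nonempty closed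
directed walk `p 0, p 1, …, p n = p 0` that visits no vertex twice except for its
first and last vertex. -/
def HasDiCycle {W : Type*} (r : W → W → Prop) : Prop :=
  ∃ (n : ℕ) (p : Fin (n + 1) → W), 0 < n ∧ p 0 = p (Fin.last n) ∧
    (∀ i : Fin n, r (p i.castSucc) (p i.succ)) ∧
    Function.Injective (fun i : Fin n => p i.castSucc)

/-- The capacity function of the `P`-fold replication of the subset `S`. -/
def repCap {V : Type*} (c : V → V → NNReal) (S : Set V) (P : ℕ) :
    ({v : V // v ∉ S} ⊕ (↥S × Fin P)) → ({v : V // v ∉ S} ⊕ (↥S × Fin P)) → NNReal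
  | Sum.inl u, Sum.inl v => c u.1 v.1
  | Sum.inl u, Sum.inr (v, _) => c u.1 v.1
  | Sum.inr (v, _), Sum.inl u => c v.1 u.1
  | Sum.inr (u, i), Sum.inr (v, j) => if i = j then c u.1 v.1 else 0

/-- Any nonempty closed directed walk contains a directed cycle. -/
lemma closedWalk_hasDiCycle {W : Type*} (r : W → W → Prop) :
    ∀ n, 0 < n → ∀ p : ℕ → W, p n = p 0 → (∀ i < n, r (p i) (p (i + 1))) →
      HasDiCycle r := by
  intro n
  induction n using Nat.strong_induction_on with
  | _ n ih =>
    intro hn p hclosed hedges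
    by_cases hinj : ∀ i j, i < n → j < n → p i = p j → i = j
    · refine ⟨n, fun k => p k, hn, ?_, ?_, ?_⟩
      · simp [hclosed.symm]
      · intro i
        simpa using hedges i i.isLt
      · intro i j hij
        simp only at hij
        exact Fin.ext (hinj i j (by simpa using i.isLt) (by simpa using j.isLt)
          (by simpa using hij))
    · push_neg at hinj
      obtain ⟨i, j, hi, hj, heq, hne⟩ := hinj
      -- WLOG i < j
      rcases lt_or_gt_of_ne hne with hlt | hlt
      · exact ih (j - i) (by omega) (by omega) (fun k => p (i + k))
          (by show p (i + (j - i)) = p (i + 0)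
              rw [show i + (j - i) = j by omega, Nat.add_zero]; exact heq.symm)
          (fun k hk => by
            have := hedges (i + k) (by omega)
            simpa [Nat.add_assoc] using this)
      · exact ih (i - j) (by omega) (by omega) (fun k => p (j + k))
          (by show p (j + (i - j)) = p (j + 0)
              rw [show j + (i - j) = i by omega, Nat.add_zero]; exact heq)
          (fun k hk => by
            have := hedges (j + k) (by omega)
            simpa [Nat.add_assoc] using this)

theorem repCap_hasDiCycle_iff {V : Type*} [Fintype V]
    (c : V → V → NNReal) (S : Set V) (P : ℕ) (hP : 1 ≤ P) :
    HasDiCycle (fun x y => 0 < repCap c S P x y) ↔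
      HasDiCycle (fun u v => 0 < c u v) := by
  constructor
  · rintro ⟨n, p, hn, hclosed, hedges, -⟩
    -- project to V
    set π : ({v : V // v ∉ S} ⊕ (↥S × Fin P)) → V :=
      fun x => match x with
        | Sum.inl u => u.1
        | Sum.inr (v, _) => v.1 with hπ
    have key : ∀ x y, 0 < repCap c S P x y → 0 < c (π x) (π y) := by
      rintro (u | ⟨u, i⟩) (v | ⟨v, j⟩) h
      · exact h
      · exact h
      · exact h
      · by_cases hij : i = j
        · simpa [repCap, hij] using h
        · simp [repCap, hij] at h
    refine closedWalk_hasDiCycle _ n hn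
      (fun k => if h : k < n + 1 then π (p ⟨k, h⟩) else π (p 0)) ?_ ?_
    · simp only [dif_pos (by omega : n < n + 1), dif_pos (by omega : 0 < n + 1)]
      exact congrArg π hclosed.symm
    · intro i hi
      simp only [dif_pos (by omega : i < n + 1), dif_pos (by omega : i + 1 < n + 1)]
      have := key _ _ (hedges ⟨i, hi⟩)
      convert this using 3 <;> rfl
  · rintro ⟨n, p, hn, hclosed, hedges, hinj⟩
    set ι : V → ({v : V // v ∉ S} ⊕ (↥S × Fin P)) :=
      fun v => if h : v ∈ S then Sum.inr (⟨v, h⟩, ⟨0, hP⟩) else Sum.inl ⟨v, h⟩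
        with hι
    have hιinj : Function.Injective ι := by
      intro u v huv
      simp only [hι] at huv
      split_ifs at huv <;> simp_all
    have hcap : ∀ u v, repCap c S P (ι u) (ι v) = c u v := by
      intro u v
      simp only [hι]
      split_ifs <;> simp [repCap]
    refine ⟨n, fun k => ι (p k), hn, congrArg ι hclosed, fun i => ?_,
      fun i j h => hinj (hιinj h)⟩
    show 0 < repCap c S P (ι (p i.castSucc)) (ι (p i.succ))
    rw [hcap]; exact hedges i

end
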